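/- Let F : ℝ^d → ℝ^d be a C¹ map that is uniformly hyperbolic on a compact set Λ ⊆ ℝ^d with F(Λ) = Λ, and assume the derivative DF is Lipschitz on a neighborhood of Λ. Then F has the shadowing property for C¹-close maps: for every δ > 0 there exists ε > 0 such that for every C¹ map G : ℝ^d → ℝ^d with sup_{x} (‖G(x) − F(x)‖ + ‖DG(x) − DF(x)‖) ≤ ε, there exists a map τ : Λ → ℝ^d with ‖τ(x) − x‖ ≤ δ for all x ∈ Λ such that ‖G^t(τ(x)) − F^t(x)‖ ≤ δ for all x ∈ Λ and all t ∈ ℕ. -/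

import Mathlib

/-!
Along an orbit `y t = F^[t] x` in `Λ` the derivatives `A t = DF (y t)` form an exponential
dichotomy. For a bounded forcing `g`, summing the stable components forward from the past and
pulling the unstable components back from the future gives a solution of
`w (t + 1) = A t (w t) + g t` with `sup ‖w‖ ≤ greenBound C λ * sup ‖g‖`.
Writing `G^[t] (y 0 + w 0) = y t + w t`, shadowing amounts to solving
`w (t + 1) = A t (w t) + ρ t (w t)` with `ρ t w = G (y t + w) - y (t + 1) - A t w`. On the
`r`-ball, `ρ t` is `ε`-small at `0` and `(ε + K r)`-Lipschitz, because `DG` is `ε`-close to `DF`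
and `DF` is `K`-Lipschitz. So for small `ε` and `r` the Green operator composed with `ρ` is a
contraction of the `r`-ball of bounded sequences, and its fixed point is the shadowing orbit.
-/

open Function

def IsUniformlyHyperbolicOn {d : ℕ}
    (F : EuclideanSpace ℝ (Fin d) → EuclideanSpace ℝ (Fin d))
    (Λ : Set (EuclideanSpace ℝ (Fin d))) : Prop :=
  ∃ (C lam : ℝ)
    (Es Eu : EuclideanSpace ℝ (Fin d) → Submodule ℝ (EuclideanSpace ℝ (Fin d))),
    1 ≤ C ∧ 0 < lam ∧ lam < 1 ∧
    (∀ x ∈ Λ, IsCompl (Es x) (Eu x)) ∧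
    (∀ x ∈ Λ, ∀ v ∈ Es x, fderiv ℝ F x v ∈ Es (F x)) ∧
    (∀ x ∈ Λ, Set.BijOn (fderiv ℝ F x) (Eu x : Set (EuclideanSpace ℝ (Fin d)))
      (Eu (F x) : Set (EuclideanSpace ℝ (Fin d)))) ∧
    (∀ x ∈ Λ, ∀ vs ∈ Es x, ∀ vu ∈ Eu x, ‖vs‖ ≤ C * ‖vs + vu‖) ∧
    (∀ x ∈ Λ, ∀ t : ℕ, ∀ v ∈ Es x, ‖fderiv ℝ (F^[t]) x v‖ ≤ C * lam ^ t * ‖v‖) ∧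
    (∀ x ∈ Λ, ∀ t : ℕ, ∀ v ∈ Eu x, C⁻¹ * (lam ^ t)⁻¹ * ‖v‖ ≤ ‖fderiv ℝ (F^[t]) x v‖)

open Set Metric Finset
open scoped NNReal

section Cocycle

variable {𝕜 : Type*} [NontriviallyNormedField 𝕜]
  {E : Type*} [NormedAddCommGroup E] [NormedSpace 𝕜 E]

def linearCocycle (A : ℕ → E →L[𝕜] E) (t : ℕ) : ℕ → E →L[𝕜] E
  | 0 => ContinuousLinearMap.id 𝕜 E
  | k + 1 => A (t + k) ∘L linearCocycle A t k

theorem linearCocycle_succ (A : ℕ → E →L[𝕜] E) (t k : ℕ) :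
    linearCocycle A t (k + 1) = A (t + k) ∘L linearCocycle A t k :=
  rfl

theorem linearCocycle_succ' (A : ℕ → E →L[𝕜] E) (t k : ℕ) :
    linearCocycle A t (k + 1) = linearCocycle A (t + 1) k ∘L A t := by
  induction k with
  | zero => rfl
  | succ k ih =>
    rw [linearCocycle_succ, ih, linearCocycle_succ (t := t + 1), Nat.add_right_comm]
    rfl

theorem fderiv_iterate_eq_linearCocycle {f : E → E} (hf : Differentiable 𝕜 f) (x : E)
    (t k : ℕ) :
    fderiv 𝕜 f^[k] (f^[t] x) = linearCocycle (fun s ↦ fderiv 𝕜 f (f^[s] x)) t k := by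
  induction k with
  | zero => simp only [iterate_zero, fderiv_id]; rfl
  | succ k ih =>
    rw [iterate_succ', fderiv_comp _ (hf _) (hf.iterate k _), ih, ← iterate_add_apply,
      add_comm k t]
    rfl

end Cocycle

open scoped BoundedContinuousFunction in
theorem exists_bounded_fixedPoint {E : Type*} [NormedAddCommGroup E] [CompleteSpace E]
    {r : ℝ} (hr : 0 ≤ r) {q : ℝ≥0} (hq : q < 1) (T : (ℕ → E) → ℕ → E)
    (hT_maps : ∀ w, (∀ t, ‖w t‖ ≤ r) → ∀ t, ‖T w t‖ ≤ r)
    (hT_contr : ∀ w w', (∀ t, ‖w t‖ ≤ r) → (∀ t, ‖w' t‖ ≤ r) →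
      ∀ M, (∀ t, ‖w t - w' t‖ ≤ M) → ∀ t, ‖T w t - T w' t‖ ≤ q * M) :
    ∃ w : ℕ → E, (∀ t, ‖w t‖ ≤ r) ∧ T w = w := by
  let X := closedBall (0 : ℕ →ᵇ E) r
  have hX : ∀ f : X, ∀ t, ‖(f : ℕ →ᵇ E) t‖ ≤ r := fun f t ↦
    (BoundedContinuousFunction.norm_coe_le_norm _ t).trans (mem_closedBall_zero_iff.1 f.2)
  let S : X → X := fun f ↦
    ⟨.ofNormedAddCommGroup (T f) continuous_of_discreteTopology r (hT_maps _ (hX f)),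
      mem_closedBall_zero_iff.2 ((BoundedContinuousFunction.norm_le hr).2 (hT_maps _ (hX f)))⟩
  have : CompleteSpace X := isClosed_closedBall.completeSpace_coe
  have hS : ContractingWith q S := by
    refine ⟨hq, LipschitzWith.of_dist_le_mul fun f f' ↦ ?_⟩
    refine (BoundedContinuousFunction.dist_le (by positivity)).2 fun t ↦ ?_
    rw [dist_eq_norm]
    refine hT_contr _ _ (hX f) (hX f') _ (fun s ↦ ?_) t
    rw [← dist_eq_norm]
    exact BoundedContinuousFunction.dist_coe_le_dist s
  obtain ⟨f, hf, -⟩ := hS.exists_fixedPoint ⟨0, mem_closedBall_self hr⟩ (edist_ne_top _ _)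
  exact ⟨f, hX f, congrArg (fun f : X ↦ ⇑(f : ℕ →ᵇ E)) hf⟩

section Dichotomy

variable {E : Type*} [NormedAddCommGroup E] [NormedSpace ℝ E]

theorem norm_sub_linearization_sub_le {F G : E → E} {y : E} {ε r : ℝ} {K : ℝ≥0}
    (hG : Differentiable ℝ G)
    (hGF : ∀ z, ‖fderiv ℝ G z - fderiv ℝ F z‖ ≤ ε)
    (hF : LipschitzOnWith K (fderiv ℝ F) (closedBall y r)) {v w : E} (hv : ‖v‖ ≤ r)
    (hw : ‖w‖ ≤ r) :
    ‖(G (y + v) - fderiv ℝ F y v) - (G (y + w) - fderiv ℝ F y w)‖ ≤ (ε + K * r) * ‖v - w‖ := by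
  have hmem : ∀ u : E, ‖u‖ ≤ r → y + u ∈ closedBall y r := fun u hu ↦ by simpa using hu
  have hderiv : ∀ z, HasFDerivAt (fun u ↦ G u - fderiv ℝ F y u) (fderiv ℝ G z - fderiv ℝ F y) z :=
    fun z ↦ (hG z).hasFDerivAt.sub (fderiv ℝ F y).hasFDerivAt
  have hbound : ∀ z ∈ closedBall y r, ‖fderiv ℝ G z - fderiv ℝ F y‖ ≤ ε + K * r := by
    intro z hz
    calc ‖fderiv ℝ G z - fderiv ℝ F y‖
        ≤ ‖fderiv ℝ G z - fderiv ℝ F z‖ + ‖fderiv ℝ F z - fderiv ℝ F y‖ :=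
          norm_sub_le_norm_sub_add_norm_sub _ _ _
      _ ≤ ε + K * r := by
        gcongr
        · exact hGF z
        · rw [← dist_eq_norm]
          exact (hF.dist_le_mul z hz y (mem_closedBall_self ((norm_nonneg v).trans hv))).trans
            (by gcongr; exact mem_closedBall.1 hz)
  have := (convex_closedBall y r).norm_image_sub_le_of_norm_hasFDerivWithin_le
    (fun z _ ↦ (hderiv z).hasFDerivWithinAt) hbound (hmem w hw) (hmem v hv)
  rw [add_sub_add_left_eq_sub] at this
  convert this using 2
  simp only [map_add]
  abel

structure ExpDichotomy (A : ℕ → E →L[ℝ] E) (C lam : ℝ) where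
  stable : ℕ → Submodule ℝ E
  unstable : ℕ → Submodule ℝ E
  one_le_C : 1 ≤ C
  lam_pos : 0 < lam
  lam_lt_one : lam < 1
  isCompl : ∀ t, IsCompl (stable t) (unstable t)
  bijOn : ∀ t, BijOn (A t) (unstable t : Set E) (unstable (t + 1))
  norm_stable_le_norm_add : ∀ t, ∀ v ∈ stable t, ∀ u ∈ unstable t, ‖v‖ ≤ C * ‖v + u‖
  norm_linearCocycle_le : ∀ t k, ∀ v ∈ stable t, ‖linearCocycle A t k v‖ ≤ C * lam ^ k * ‖v‖
  le_norm_linearCocycle :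
    ∀ t k, ∀ v ∈ unstable t, C⁻¹ * (lam ^ k)⁻¹ * ‖v‖ ≤ ‖linearCocycle A t k v‖

noncomputable def greenBound (C lam : ℝ) : ℝ := 2 * C * (C + 1) / (1 - lam)

theorem greenBound_pos {C lam : ℝ} (hC : 0 < C) (hlam : lam < 1) : 0 < greenBound C lam := by
  unfold greenBound
  have : 0 < 1 - lam := by linarith
  positivity

namespace ExpDichotomy

variable {A : ℕ → E →L[ℝ] E} {C lam : ℝ} (D : ExpDichotomy A C lam)

theorem C_pos (D : ExpDichotomy A C lam) : 0 < C := zero_lt_one.trans_le D.one_le_C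

noncomputable def stableProj (t : ℕ) : E →ₗ[ℝ] E :=
  (D.stable t).projection (D.unstable t) (D.isCompl t)

noncomputable def unstableProj (t : ℕ) : E →ₗ[ℝ] E :=
  (D.unstable t).projection (D.stable t) (D.isCompl t).symm

theorem stableProj_mem (t : ℕ) (v : E) : D.stableProj t v ∈ D.stable t :=
  Submodule.projection_apply_mem _ v

theorem unstableProj_mem (t : ℕ) (v : E) : D.unstableProj t v ∈ D.unstable t :=
  Submodule.projection_apply_mem _ v

theorem stableProj_add_unstableProj (t : ℕ) (v : E) :
    D.stableProj t v + D.unstableProj t v = v :=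
  Submodule.projection_add_projection_eq_self _ v

theorem norm_stableProj_le (t : ℕ) (v : E) : ‖D.stableProj t v‖ ≤ C * ‖v‖ := by
  simpa only [stableProj_add_unstableProj] using
    D.norm_stable_le_norm_add t _ (D.stableProj_mem t v) _ (D.unstableProj_mem t v)

theorem norm_unstableProj_le (t : ℕ) (v : E) : ‖D.unstableProj t v‖ ≤ (C + 1) * ‖v‖ := by
  rw [eq_sub_of_add_eq' (D.stableProj_add_unstableProj t v)]
  linarith [norm_sub_le v (D.stableProj t v), D.norm_stableProj_le t v]

theorem bijOn_linearCocycle (t k : ℕ) :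
    BijOn (linearCocycle A t k) (D.unstable t : Set E) (D.unstable (t + k)) := by
  induction k with
  | zero => exact bijOn_id _
  | succ k ih => exact (D.bijOn (t + k)).comp ih

noncomputable def unstableInv (t k : ℕ) : E → E :=
  invFunOn (linearCocycle A t k) (D.unstable t)

variable {D}

theorem unstableInv_mem {t k : ℕ} {v : E} (hv : v ∈ D.unstable (t + k)) :
    D.unstableInv t k v ∈ D.unstable t :=
  (D.bijOn_linearCocycle t k).surjOn.mapsTo_invFunOn hv

theorem linearCocycle_unstableInv {t k : ℕ} {v : E} (hv : v ∈ D.unstable (t + k)) :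
    linearCocycle A t k (D.unstableInv t k v) = v :=
  (D.bijOn_linearCocycle t k).surjOn.rightInvOn_invFunOn hv

theorem unstableInv_linearCocycle {t k : ℕ} {u : E} (hu : u ∈ D.unstable t) :
    D.unstableInv t k (linearCocycle A t k u) = u :=
  (D.bijOn_linearCocycle t k).injOn.leftInvOn_invFunOn hu

theorem unstableInv_sub {t k : ℕ} {u v : E} (hu : u ∈ D.unstable (t + k))
    (hv : v ∈ D.unstable (t + k)) :
    D.unstableInv t k (u - v) = D.unstableInv t k u - D.unstableInv t k v := by
  conv_lhs => rw [← linearCocycle_unstableInv hu, ← linearCocycle_unstableInv hv, ← map_sub]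
  exact unstableInv_linearCocycle (sub_mem (unstableInv_mem hu) (unstableInv_mem hv))

theorem norm_unstableInv_le {t k : ℕ} {v : E} (hv : v ∈ D.unstable (t + k)) :
    ‖D.unstableInv t k v‖ ≤ C * lam ^ k * ‖v‖ := by
  have h := D.le_norm_linearCocycle t k _ (unstableInv_mem hv)
  rw [linearCocycle_unstableInv hv, ← mul_inv, inv_mul_le_iff₀] at h
  · exact h
  · exact mul_pos D.C_pos (pow_pos D.lam_pos k)

theorem map_unstableInv_succ {t k : ℕ} {v : E} (hv : v ∈ D.unstable (t + (k + 1))) :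
    A t (D.unstableInv t (k + 1) v) = D.unstableInv (t + 1) k v := by
  conv_rhs => rw [← linearCocycle_unstableInv hv, linearCocycle_succ',
    ContinuousLinearMap.comp_apply,
    unstableInv_linearCocycle ((D.bijOn t).mapsTo (unstableInv_mem hv))]

variable (D)

noncomputable def unstablePullback (t k : ℕ) (v : E) : E :=
  D.unstableInv t k (D.unstableProj (t + k) v)

theorem norm_unstablePullback_le (t k : ℕ) (v : E) :
    ‖D.unstablePullback t k v‖ ≤ C * (C + 1) * lam ^ k * ‖v‖ := by
  have h0 : 0 ≤ C * lam ^ k := by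
    have := D.C_pos; have := D.lam_pos; positivity
  calc ‖D.unstablePullback t k v‖ ≤ C * lam ^ k * ‖D.unstableProj (t + k) v‖ :=
        norm_unstableInv_le (D.unstableProj_mem _ v)
    _ ≤ C * lam ^ k * ((C + 1) * ‖v‖) := by gcongr; exact D.norm_unstableProj_le _ v
    _ = C * (C + 1) * lam ^ k * ‖v‖ := by ring

theorem unstablePullback_sub (t k : ℕ) (u v : E) :
    D.unstablePullback t k (u - v) = D.unstablePullback t k u - D.unstablePullback t k v := by
  rw [unstablePullback, map_sub]
  exact unstableInv_sub (D.unstableProj_mem _ u) (D.unstableProj_mem _ v)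

theorem unstablePullback_zero (t : ℕ) (v : E) :
    D.unstablePullback t 0 v = D.unstableProj t v :=
  unstableInv_linearCocycle (k := 0) (D.unstableProj_mem t v)

theorem map_unstablePullback_succ (t k : ℕ) (v : E) :
    A t (D.unstablePullback t (k + 1) v) = D.unstablePullback (t + 1) k v := by
  rw [unstablePullback, map_unstableInv_succ (D.unstableProj_mem _ v), unstablePullback,
    Nat.add_right_comm, add_assoc]

-- The bounded solution of `w (t + 1) = A t (w t) + g t` with `w 0 ∈ unstable 0`.
noncomputable def green (g : ℕ → E) (t : ℕ) : E :=
  ∑ s ∈ range t, linearCocycle A (s + 1) (t - s - 1) (D.stableProj (s + 1) (g s)) -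
    ∑' k, D.unstablePullback t (k + 1) (g (t + k))

variable {g : ℕ → E} {M : ℝ}

theorem norm_unstablePullback_succ_le (hg : ∀ s, ‖g s‖ ≤ M) (t k : ℕ) :
    ‖D.unstablePullback t (k + 1) (g (t + k))‖ ≤ C * (C + 1) * M * lam * lam ^ k := by
  have : 0 ≤ C * (C + 1) * lam ^ (k + 1) := by
    have := D.C_pos; have := D.lam_pos; positivity
  calc _ ≤ C * (C + 1) * lam ^ (k + 1) * ‖g (t + k)‖ := D.norm_unstablePullback_le _ _ _
    _ ≤ C * (C + 1) * lam ^ (k + 1) * M := by gcongr; exact hg _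
    _ = C * (C + 1) * M * lam * lam ^ k := by ring

theorem norm_green_le (hg : ∀ s, ‖g s‖ ≤ M) (t : ℕ) : ‖D.green g t‖ ≤ greenBound C lam * M := by
  have hC := D.one_le_C
  have hlam := D.lam_pos
  have h1 : 0 < 1 - lam := by linarith [D.lam_lt_one]
  have hM : 0 ≤ M := (norm_nonneg _).trans (hg 0)
  have hstable : ‖∑ s ∈ range t, linearCocycle A (s + 1) (t - s - 1) (D.stableProj (s + 1) (g s))‖
      ≤ C * C * M * (1 - lam)⁻¹ := by
    calc _ ≤ ∑ s ∈ range t, C * C * M * lam ^ (t - 1 - s) := by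
          refine norm_sum_le_of_le _ fun s _ ↦ ?_
          calc _ ≤ C * lam ^ (t - s - 1) * ‖D.stableProj (s + 1) (g s)‖ :=
                D.norm_linearCocycle_le _ _ _ (D.stableProj_mem _ _)
            _ ≤ C * lam ^ (t - s - 1) * (C * M) := by
                gcongr; exact (D.norm_stableProj_le _ _).trans (by gcongr; exact hg s)
            _ = C * C * M * lam ^ (t - 1 - s) := by rw [Nat.sub_right_comm]; ring
      _ = C * C * M * ∑ j ∈ range t, lam ^ j := by
          rw [← mul_sum, sum_range_reflect (fun j ↦ lam ^ j) t]
      _ ≤ C * C * M * (1 - lam)⁻¹ := by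
          gcongr
          simpa [← range_eq_Ico, div_eq_mul_inv] using
            geom_sum_Ico_le_of_lt_one (m := 0) (n := t) hlam.le D.lam_lt_one
  have hunstable : ‖∑' k, D.unstablePullback t (k + 1) (g (t + k))‖
      ≤ C * (C + 1) * M * lam * (1 - lam)⁻¹ :=
    tsum_of_norm_bounded ((hasSum_geometric_of_lt_one hlam.le D.lam_lt_one).mul_left _)
      (D.norm_unstablePullback_succ_le hg t)
  calc ‖D.green g t‖ ≤ C * C * M * (1 - lam)⁻¹ + C * (C + 1) * M * lam * (1 - lam)⁻¹ :=
        (norm_sub_le _ _).trans (add_le_add hstable hunstable)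
    _ ≤ greenBound C lam * M := by
        rw [greenBound, div_eq_mul_inv]
        have : C * C * M + C * (C + 1) * M * lam ≤ 2 * C * (C + 1) * M := by
          nlinarith [mul_nonneg (mul_nonneg (by positivity : (0:ℝ) ≤ C * (C + 1)) hM)
            (by linarith [D.lam_lt_one] : (0:ℝ) ≤ 1 - lam)]
        nlinarith [inv_pos.2 h1]

variable [CompleteSpace E]

theorem summable_unstablePullback (hg : ∀ s, ‖g s‖ ≤ M) (t : ℕ) :
    Summable fun k ↦ D.unstablePullback t (k + 1) (g (t + k)) :=
  .of_norm_bounded ((summable_geometric_of_lt_one D.lam_pos.le D.lam_lt_one).mul_left _)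
    (D.norm_unstablePullback_succ_le hg t)

theorem green_sub {g' : ℕ → E} {M' : ℝ} (hg : ∀ s, ‖g s‖ ≤ M) (hg' : ∀ s, ‖g' s‖ ≤ M')
    (t : ℕ) : D.green (fun s ↦ g s - g' s) t = D.green g t - D.green g' t := by
  simp only [green, map_sub, unstablePullback_sub, sum_sub_distrib,
    (D.summable_unstablePullback hg t).tsum_sub (D.summable_unstablePullback hg' t)]
  abel

theorem map_green (hg : ∀ s, ‖g s‖ ≤ M) (t : ℕ) :
    A t (D.green g t) =
      ∑ s ∈ range t, linearCocycle A (s + 1) (t - s) (D.stableProj (s + 1) (g s)) -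
        ∑' k, D.unstablePullback (t + 1) k (g (t + k)) := by
  rw [green, map_sub, map_sum, (A t).map_tsum (D.summable_unstablePullback hg t)]
  congr 1
  · refine sum_congr rfl fun s hs ↦ ?_
    obtain ⟨j, rfl⟩ := Nat.exists_eq_add_of_lt (mem_range.1 hs)
    rw [show s + j + 1 - s - 1 = j by omega, show s + j + 1 - s = j + 1 by omega,
      linearCocycle_succ, show s + 1 + j = s + j + 1 by omega]
    rfl
  · simp only [D.map_unstablePullback_succ]

theorem green_succ (hg : ∀ s, ‖g s‖ ≤ M) (t : ℕ) :
    D.green g (t + 1) = A t (D.green g t) + g t := by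
  have hshift : Summable fun k ↦ D.unstablePullback (t + 1) (k + 1) (g (t + (k + 1))) := by
    refine (D.summable_unstablePullback hg (t + 1)).congr fun k ↦ ?_
    rw [show t + 1 + k = t + (k + 1) by omega]
  have hstable : ∑ s ∈ range (t + 1),
      linearCocycle A (s + 1) (t + 1 - s - 1) (D.stableProj (s + 1) (g s)) =
      ∑ s ∈ range t, linearCocycle A (s + 1) (t - s) (D.stableProj (s + 1) (g s)) +
        D.stableProj (t + 1) (g t) := by
    rw [sum_range_succ, show t + 1 - t - 1 = 0 by omega]
    exact congrArg (· + _) (sum_congr rfl fun s _ ↦ by rw [show t + 1 - s - 1 = t - s by omega])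
  have hunstable : ∀ k, D.unstablePullback (t + 1) (k + 1) (g (t + 1 + k)) =
      D.unstablePullback (t + 1) (k + 1) (g (t + (k + 1))) := fun k ↦ by
    rw [show t + 1 + k = t + (k + 1) by omega]
  rw [green, hstable, tsum_congr hunstable, D.map_green hg,
    tsum_eq_zero_add' (f := fun k ↦ D.unstablePullback (t + 1) k (g (t + k))) hshift,
    D.unstablePullback_zero, add_zero]
  linear_combination (norm := module) D.stableProj_add_unstableProj (t + 1) (g t)

theorem exists_bounded_solution (D : ExpDichotomy A C lam) (ρ : ℕ → E → E) {a L r : ℝ}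
    (hL : 0 ≤ L) (hρ₀ : ∀ t, ‖ρ t 0‖ ≤ a)
    (hρ : ∀ t v w, ‖v‖ ≤ r → ‖w‖ ≤ r → ‖ρ t v - ρ t w‖ ≤ L * ‖v - w‖)
    (hL_small : greenBound C lam * L ≤ 1 / 2) (ha_small : greenBound C lam * a ≤ r / 2) :
    ∃ w : ℕ → E, (∀ t, ‖w t‖ ≤ r) ∧ ∀ t, w (t + 1) = A t (w t) + ρ t (w t) := by
  have hK := greenBound_pos D.C_pos D.lam_lt_one
  have hr : 0 ≤ r := by
    nlinarith [mul_nonneg hK.le ((norm_nonneg _).trans (hρ₀ 0))]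
  have hbound : ∀ w : ℕ → E, (∀ t, ‖w t‖ ≤ r) → ∀ t, ‖ρ t (w t)‖ ≤ a + L * r := fun w hw t ↦
    calc ‖ρ t (w t)‖ ≤ ‖ρ t 0‖ + ‖ρ t (w t) - ρ t 0‖ := norm_le_insert' _ _
      _ ≤ a + L * ‖w t - 0‖ := add_le_add (hρ₀ t) (hρ t _ 0 (hw t) (by simpa using hr))
      _ ≤ a + L * r := by rw [sub_zero]; gcongr; exact hw t
  have hcontr : ∀ w w' : ℕ → E, (∀ t, ‖w t‖ ≤ r) → (∀ t, ‖w' t‖ ≤ r) → ∀ M,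
      (∀ t, ‖w t - w' t‖ ≤ M) → ∀ t, ‖D.green (fun s ↦ ρ s (w s)) t -
        D.green (fun s ↦ ρ s (w' s)) t‖ ≤ (1 / 2 : ℝ≥0) * M := by
    intro w w' hw hw' M hM t
    have hM₀ : 0 ≤ M := (norm_nonneg _).trans (hM 0)
    have hdiff : ∀ s, ‖ρ s (w s) - ρ s (w' s)‖ ≤ L * M := fun s ↦
      (hρ s _ _ (hw s) (hw' s)).trans (mul_le_mul_of_nonneg_left (hM s) hL)
    rw [← D.green_sub (hbound w hw) (hbound w' hw')]
    refine (D.norm_green_le hdiff t).trans ?_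
    push_cast
    nlinarith
  obtain ⟨w, hw, hfix⟩ := exists_bounded_fixedPoint hr (by norm_num) _
    (fun w hw t ↦ (D.norm_green_le (hbound w hw) t).trans (by nlinarith)) hcontr
  refine ⟨w, hw, fun t ↦ ?_⟩
  calc w (t + 1) = D.green (fun s ↦ ρ s (w s)) (t + 1) := (congrFun hfix _).symm
    _ = A t (D.green (fun s ↦ ρ s (w s)) t) + ρ t (w t) := D.green_succ (hbound w hw) t
    _ = A t (w t) + ρ t (w t) := by rw [congrFun hfix t]

theorem shadowing {F G : E → E} {y : ℕ → E} (hy : ∀ t, y (t + 1) = F (y t))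
    (D : ExpDichotomy (fun t ↦ fderiv ℝ F (y t)) C lam) (hG : Differentiable ℝ G) {ε r : ℝ}
    {K : ℝ≥0} (hGF₀ : ∀ z, ‖G z - F z‖ ≤ ε) (hGF₁ : ∀ z, ‖fderiv ℝ G z - fderiv ℝ F z‖ ≤ ε)
    (hF : ∀ t, LipschitzOnWith K (fderiv ℝ F) (closedBall (y t) r))
    (hL_small : greenBound C lam * (ε + K * r) ≤ 1 / 2)
    (hε_small : greenBound C lam * ε ≤ r / 2) :
    ∃ z, ‖z - y 0‖ ≤ r ∧ ∀ t, ‖G^[t] z - y t‖ ≤ r := by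
  have hε : 0 ≤ ε := (norm_nonneg _).trans (hGF₀ 0)
  have hr : 0 ≤ r := by
    nlinarith [mul_nonneg (greenBound_pos D.C_pos D.lam_lt_one).le hε]
  obtain ⟨w, hw, hrec⟩ := D.exists_bounded_solution
    (fun t v ↦ G (y t + v) - y (t + 1) - fderiv ℝ F (y t) v) (by positivity)
    (fun t ↦ by simpa [hy] using hGF₀ (y t))
    (fun t v v' hv hv' ↦ by
      convert norm_sub_linearization_sub_le hG hGF₁ (hF t) hv hv' using 2
      abel)
    hL_small hε_small
  have horbit : ∀ t, G^[t] (y 0 + w 0) = y t + w t := by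
    intro t
    induction t with
    | zero => rfl
    | succ t ih => rw [iterate_succ_apply', ih, hrec]; abel
  exact ⟨y 0 + w 0, by simpa using hw 0, fun t ↦ by simpa [horbit t] using hw t⟩

end ExpDichotomy

end Dichotomy

theorem IsUniformlyHyperbolicOn.exists_expDichotomy {d : ℕ}
    {F : EuclideanSpace ℝ (Fin d) → EuclideanSpace ℝ (Fin d)}
    {Λ : Set (EuclideanSpace ℝ (Fin d))} (h : IsUniformlyHyperbolicOn F Λ)
    (hF : Differentiable ℝ F) (hΛ : MapsTo F Λ Λ) :
    ∃ C lam : ℝ, ∀ x ∈ Λ, Nonempty (ExpDichotomy (fun t ↦ fderiv ℝ F (F^[t] x)) C lam) := by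
  obtain ⟨C, lam, Es, Eu, hC, hlam₀, hlam₁, hcompl, -, hbij, hproj, hS, hU⟩ := h
  refine ⟨C, lam, fun x hx ↦ ⟨{
    stable := fun t ↦ Es (F^[t] x)
    unstable := fun t ↦ Eu (F^[t] x)
    one_le_C := hC
    lam_pos := hlam₀
    lam_lt_one := hlam₁
    isCompl := fun t ↦ hcompl _ (hΛ.iterate t hx)
    bijOn := fun t ↦ by
      simpa only [iterate_succ_apply'] using hbij _ (hΛ.iterate t hx)
    norm_stable_le_norm_add := fun t ↦ hproj _ (hΛ.iterate t hx)
    norm_linearCocycle_le := fun t k v hv ↦ by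
      simpa only [fderiv_iterate_eq_linearCocycle hF] using hS _ (hΛ.iterate t hx) k v hv
    le_norm_linearCocycle := fun t k v hv ↦ by
      simpa only [fderiv_iterate_eq_linearCocycle hF] using hU _ (hΛ.iterate t hx) k v hv }⟩⟩

theorem exists_shadowing_constants (K₀ : ℝ) (K : ℝ≥0) {δ : ℝ} (hδ : 0 < δ) :
    ∃ r ε : ℝ, 0 < r ∧ r ≤ δ ∧ 0 < ε ∧ K₀ * (ε + K * r) ≤ 1 / 2 ∧ K₀ * ε ≤ r / 2 := by
  obtain ⟨c, hc, hK₀c⟩ : ∃ c : ℝ, 1 ≤ c ∧ K₀ ≤ c :=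
    ⟨|K₀| + 1, by linarith [abs_nonneg K₀], by linarith [le_abs_self K₀]⟩
  have hK : (0 : ℝ) ≤ K := K.2
  have hm : 0 < min δ 1 := lt_min hδ one_pos
  obtain ⟨r, hr⟩ : ∃ r, r = min δ 1 / (2 * c * (K + 1)) := ⟨_, rfl⟩
  have hr₀ : 0 < r := by rw [hr]; positivity
  have hcr : c * (K + 1) * r ≤ 1 / 2 := by
    rw [hr, mul_div_assoc', div_le_iff₀ (by positivity)]
    have hcK : 0 < c * (K + 1) := by positivity
    nlinarith [min_le_right δ 1]
  have hcε : c * (r / (2 * c)) = r / 2 := by field_simp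
  refine ⟨r, r / (2 * c), hr₀, ?_, by positivity, ?_, ?_⟩
  · rw [hr]
    exact (div_le_self hm.le (by nlinarith)).trans (min_le_left _ _)
  · calc K₀ * (r / (2 * c) + K * r) ≤ c * (r / (2 * c) + K * r) := by gcongr
      _ ≤ 1 / 2 := by nlinarith
  · calc K₀ * (r / (2 * c)) ≤ c * (r / (2 * c)) := by gcongr
      _ = r / 2 := hcε

/-- Shadowing property for C¹-close maps of a uniformly hyperbolic map. -/
theorem shadowing_for_C1_close_maps {d : ℕ}
    (F : EuclideanSpace ℝ (Fin d) → EuclideanSpace ℝ (Fin d))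
    (Λ : Set (EuclideanSpace ℝ (Fin d)))
    (hΛc : IsCompact Λ) (hFΛ : F '' Λ = Λ)
    (hF : ContDiff ℝ 1 F)
    (hhyp : IsUniformlyHyperbolicOn F Λ)
    (hlip : ∃ (K : NNReal) (U : Set (EuclideanSpace ℝ (Fin d))),
      IsOpen U ∧ Λ ⊆ U ∧ LipschitzOnWith K (fderiv ℝ F) U) :
    ∀ δ > (0 : ℝ), ∃ ε > (0 : ℝ),
      ∀ G : EuclideanSpace ℝ (Fin d) → EuclideanSpace ℝ (Fin d), ContDiff ℝ 1 G →
        (∀ x, ‖G x - F x‖ + ‖fderiv ℝ G x - fderiv ℝ F x‖ ≤ ε) →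
        ∃ τ : EuclideanSpace ℝ (Fin d) → EuclideanSpace ℝ (Fin d),
          (∀ x ∈ Λ, ‖τ x - x‖ ≤ δ) ∧
          (∀ x ∈ Λ, ∀ t : ℕ, ‖G^[t] (τ x) - F^[t] x‖ ≤ δ) := by
  intro δ hδ
  obtain ⟨K, U, hU, hΛU, hlipU⟩ := hlip
  obtain ⟨r₀, hr₀, hr₀U⟩ := hΛc.exists_cthickening_subset_open hU hΛU
  have hΛ : MapsTo F Λ Λ := fun x hx ↦ hFΛ ▸ mem_image_of_mem F hx
  obtain ⟨C, lam, hD⟩ := hhyp.exists_expDichotomy (hF.differentiable one_ne_zero) hΛ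
  obtain ⟨r, ε, hr, hrδ, hε, hL_small, hε_small⟩ :=
    exists_shadowing_constants (greenBound C lam) K (lt_min hδ hr₀)
  refine ⟨ε, hε, fun G hG hGF ↦ ?_⟩
  have hshadow : ∀ x ∈ Λ, ∃ z, ‖z - x‖ ≤ r ∧ ∀ t, ‖G^[t] z - F^[t] x‖ ≤ r := by
    intro x hx
    obtain ⟨D⟩ := hD x hx
    have hlip_orbit : ∀ t, LipschitzOnWith K (fderiv ℝ F) (closedBall (F^[t] x) r) := fun t ↦
      hlipU.mono <| (closedBall_subset_cthickening (hΛ.iterate t hx) r).trans <|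
        (cthickening_mono (hrδ.trans (min_le_right _ _)) Λ).trans hr₀U
    simpa using D.shadowing (fun t ↦ iterate_succ_apply' F t x) (hG.differentiable one_ne_zero)
      (fun z ↦ by linarith [hGF z, norm_nonneg (fderiv ℝ G z - fderiv ℝ F z)])
      (fun z ↦ by linarith [hGF z, norm_nonneg (G z - F z)]) hlip_orbit hL_small hε_small
  choose! τ hτ₀ hτ using hshadow
  have hrδ' : r ≤ δ := hrδ.trans (min_le_left _ _)
  exact ⟨τ, fun x hx ↦ (hτ₀ x hx).trans hrδ', fun x hx t ↦ (hτ x hx t).trans hrδ'⟩
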